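/- Let g be a unitary automorphism of a hermitian space (V, h) over (E, σ), and let W ⊆ V be a g-invariant totally isotropic subspace (W ⊆ W^⊥). Then W^⊥ is g-invariant, and: (i) the characteristic polynomial of g on V factors as the product of the characteristic polynomials of the maps induced by g on W, on W^⊥/W, and on V/W^⊥; (ii) h induces a well-defined nondegenerate hermitian form on W^⊥/W for which the induced automorphism is unitary, and the characteristic polynomial Q of g on W^⊥/W satisfies Q = Q*; (iii) the characteristic polynomial of g on V/W^⊥ equals (the characteristic polynomial of g on W)*. -/

import Mathlib

open scoped Classical

/-- `P*`: for monic `P` with nonzero constant term `b_d`, `P*(T) = σ(b_d)⁻¹ T^d P^σ(T⁻¹)`. -/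
noncomputable def pstar {k : Type*} [Field k] (σ : k →+* k) (P : Polynomial k) : Polynomial k :=
  Polynomial.C (σ (P.coeff 0))⁻¹ * (P.map σ).reverse

/-- The perpendicular `W^⊥ = {x : h(x, W) = 0}` of a subspace w.r.t. a sesquilinear form. -/
def perp {k V : Type*} [Field k] [AddCommGroup V] [Module k V] {σ : k →+* k}
    (B : V →ₗ[k] V →ₛₗ[σ] k) (W : Submodule k V) : Submodule k V where
  carrier := {x | ∀ w ∈ W, B x w = 0}
  add_mem' := by
    intro x y hx hy w hw
    simp [map_add, hx w hw, hy w hw]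
  zero_mem' := by
    intro w hw
    simp
  smul_mem' := by
    intro c x hx w hw
    simp [map_smul, hx w hw]

/-- The endomorphism induced on the subquotient `P/W` by an endomorphism `f` leaving
`P` and `W` invariant (junk value `0` otherwise). -/
noncomputable def inducedMap {k V : Type*} [Field k] [AddCommGroup V] [Module k V]
    (f : V →ₗ[k] V) (W P : Submodule k V) :
    (↥P ⧸ (Submodule.comap P.subtype W)) →ₗ[k] (↥P ⧸ (Submodule.comap P.subtype W)) :=
  if hf : (∀ x ∈ P, f x ∈ P) ∧ (∀ x ∈ W, f x ∈ W) then
    Submodule.mapQ _ _ (f.restrict hf.1) (by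
      intro x hx
      simp only [Submodule.mem_comap, LinearMap.restrict_apply, Submodule.subtype_apply] at hx ⊢
      exact hf.2 _ hx)
  else 0

/-- The restriction of an endomorphism `f` to an invariant subspace `W`
(junk value `0` otherwise). -/
noncomputable def restrictMap {k V : Type*} [Field k] [AddCommGroup V] [Module k V]
    (f : V →ₗ[k] V) (W : Submodule k V) : ↥W →ₗ[k] ↥W :=
  if hf : ∀ x ∈ W, f x ∈ W then f.restrict hf else 0

/-- The endomorphism induced on the quotient `V/W` by an endomorphism `f` leaving `W`
invariant (junk value `0` otherwise). -/
noncomputable def quotMap {k V : Type*} [Field k] [AddCommGroup V] [Module k V]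
    (f : V →ₗ[k] V) (W : Submodule k V) : (V ⧸ W) →ₗ[k] (V ⧸ W) :=
  if hf : W ≤ W.comap f then Submodule.mapQ W W f hf else 0

/-!
Since `g W = W` and `g` is unitary, `g` also preserves `W^⊥`, so the flag `0 ⊆ W ⊆ W^⊥ ⊆ V` is
`g`-stable and the characteristic polynomial factors along it. Nondegeneracy of `h` gives
`dim W + dim W^⊥ = dim V`, hence `W^⊥⊥ = W`; so `h` descends to a nondegenerate form on
`W^⊥/W` and to a perfect pairing `W × V/W^⊥ → E`. Whenever a perfect `σ`-sesquilinear pairing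
satisfies `P (f x) (f' y) = P x y`, its Gram matrix `G` gives
`Aᵀ G σ(A') = G`, so `σ(A')` is conjugate to `(A⁻¹)ᵀ` and `charpoly f' = (charpoly f)*`.
-/

section CharpolyFlag

open Module

theorem LinearMap.charpoly_eq_charpoly_restrict_mul_charpoly_mapQ {R V : Type*} [CommRing R]
    [AddCommGroup V] [Module R V] [Module.Free R V] [Module.Finite R V]
    (W : Submodule R V) [Module.Free R W] [Module.Finite R W]
    [Module.Free R (V ⧸ W)] [Module.Finite R (V ⧸ W)]
    (f : V →ₗ[R] V) (hf : W ≤ W.comap f) :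
    f.charpoly = (f.restrict hf).charpoly * (W.mapQ W f hf).charpoly := by
  let bW := Module.Free.chooseBasis R W
  let bQ := Module.Free.chooseBasis R (V ⧸ W)
  let b := bW.sumQuot bQ
  have hmat : LinearMap.toMatrix b b f = Matrix.fromBlocks
      (LinearMap.toMatrix bW bW (f.restrict hf))
      (Matrix.of fun i l ↦ b.repr (f (b (Sum.inr l))) (Sum.inl i))
      0 (LinearMap.toMatrix bQ bQ (W.mapQ W f hf)) := by
    ext (i | i) (j | j)
    · simp only [b, LinearMap.toMatrix_apply, Basis.sumQuot_inl, Matrix.fromBlocks_apply₁₁]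
      apply Basis.sumQuot_repr_inl_of_mem
    · simp [LinearMap.toMatrix_apply]
    · simp [b, LinearMap.toMatrix_apply, (Submodule.Quotient.mk_eq_zero W).mpr (hf (bW j).2)]
    · simp only [b, LinearMap.toMatrix_apply, Basis.sumQuot_repr_inr, Matrix.fromBlocks_apply₂₂]
      rw [← Basis.sumQuot_inr bW bQ j, W.mapQ_apply]
      rfl
  rw [← LinearMap.charpoly_toMatrix f b, hmat, Matrix.charpoly_fromBlocks_zero₂₁,
    LinearMap.charpoly_toMatrix, LinearMap.charpoly_toMatrix]

variable {K V : Type*} [Field K] [AddCommGroup V] [Module K V]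

theorem restrictMap_eq (f : V →ₗ[K] V) {W : Submodule K V} (hW : ∀ x ∈ W, f x ∈ W) :
    restrictMap f W = f.restrict hW :=
  dif_pos hW

theorem quotMap_eq (f : V →ₗ[K] V) {W : Submodule K V} (hW : W ≤ W.comap f) :
    quotMap f W = W.mapQ W f hW :=
  dif_pos hW

theorem inducedMap_eq (f : V →ₗ[K] V) {W P : Submodule K V} (hP : ∀ x ∈ P, f x ∈ P)
    (hW : ∀ x ∈ W, f x ∈ W) :
    inducedMap f W P =
      (W.comap P.subtype).mapQ (W.comap P.subtype) (f.restrict hP) (fun x hx ↦ hW x hx) :=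
  dif_pos ⟨hP, hW⟩

theorem inducedMap_mk (f : V →ₗ[K] V) {W P : Submodule K V} (hP : ∀ x ∈ P, f x ∈ P)
    (hW : ∀ x ∈ W, f x ∈ W) (x : P) :
    inducedMap f W P (Submodule.Quotient.mk x) = Submodule.Quotient.mk (f.restrict hP x) := by
  rw [inducedMap_eq f hP hW]
  rfl

theorem quotMap_mk (f : V →ₗ[K] V) {W : Submodule K V} (hW : W ≤ W.comap f) (x : V) :
    quotMap f W (Submodule.Quotient.mk x) = Submodule.Quotient.mk (f x) := by
  rw [quotMap_eq f hW, Submodule.mapQ_apply]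

theorem charpoly_eq_restrictMap_mul_inducedMap_mul_quotMap [FiniteDimensional K V]
    (f : V →ₗ[K] V) {W P : Submodule K V} (hWP : W ≤ P) (hW : ∀ x ∈ W, f x ∈ W)
    (hP : ∀ x ∈ P, f x ∈ P) :
    f.charpoly = (restrictMap f W).charpoly * (inducedMap f W P).charpoly *
      (quotMap f P).charpoly := by
  let W' := W.comap P.subtype
  have hW' : W' ≤ W'.comap (f.restrict hP) := fun x hx ↦ hW x hx
  have hrestrict : ((f.restrict hP).restrict hW').charpoly = (restrictMap f W).charpoly := by
    rw [restrictMap_eq f hW, ← (Submodule.comapSubtypeEquivOfLe hWP).charpoly_conj]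
    rfl
  rw [quotMap_eq f hP, inducedMap_eq f hP hW,
    LinearMap.charpoly_eq_charpoly_restrict_mul_charpoly_mapQ P f hP,
    LinearMap.charpoly_eq_charpoly_restrict_mul_charpoly_mapQ W' (f.restrict hP) hW', hrestrict]

end CharpolyFlag

section Pairing

open Module Polynomial Matrix

variable {K : Type*} [Field K] {σ : K →+* K}

theorem Polynomial.reverse_map {L : Type*} [Field L] (τ : K →+* L) (p : K[X]) :
    (p.map τ).reverse = p.reverse.map τ := by
  rw [reverse, reverse, natDegree_map, reflect_map]

variable {n : Type*} [Fintype n] [DecidableEq n]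

theorem Matrix.charpoly_inv_eq_C_mul_reverse (A : Matrix n n K) (hA : IsUnit A.det) :
    A⁻¹.charpoly = C (A.charpoly.coeff 0)⁻¹ * A.charpoly.reverse := by
  rw [Matrix.charpoly_inv A ((Matrix.isUnit_iff_isUnit_det A).mpr hA), Matrix.reverse_charpoly,
    Matrix.det_eq_sign_charpoly_coeff, Ring.inverse_eq_inv', mul_inv, ← inv_pow, inv_neg, inv_one,
    map_mul, map_pow, map_neg, map_one, ← mul_assoc, ← mul_pow, neg_one_mul, neg_neg, one_pow,
    one_mul]

theorem pstar_charpoly_eq_map_charpoly_inv (A : Matrix n n K) (hA : IsUnit A.det) :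
    pstar σ A.charpoly = A⁻¹.charpoly.map σ := by
  rw [A.charpoly_inv_eq_C_mul_reverse hA, Polynomial.map_mul, map_C, map_inv₀, pstar,
    reverse_map]

theorem Matrix.charpoly_eq_pstar_of_transpose_mul_mul_map (hσ : ∀ x, σ (σ x) = x)
    {A A' G : Matrix n n K} (hG : IsUnit G.det) (h : Aᵀ * G * A'.map σ = G) :
    A'.charpoly = pstar σ A.charpoly := by
  have hA : IsUnit A.det := by
    have hdet := congrArg Matrix.det h
    rw [det_mul, det_mul, det_transpose, mul_right_comm, mul_eq_right₀ hG.ne_zero] at hdet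
    exact IsUnit.of_mul_eq_one _ hdet
  have hAT : IsUnit Aᵀ.det := by rwa [det_transpose]
  have hconj : A'.map σ = G⁻¹ * (A⁻¹)ᵀ * G :=
    calc A'.map σ = G⁻¹ * (Aᵀ⁻¹ * (Aᵀ * G * A'.map σ)) := by
          rw [Matrix.mul_assoc Aᵀ, nonsing_inv_mul_cancel_left _ _ hAT,
            nonsing_inv_mul_cancel_left _ _ hG]
      _ = G⁻¹ * (A⁻¹)ᵀ * G := by rw [h, transpose_nonsing_inv, Matrix.mul_assoc]
  have hmap : A'.charpoly.map σ = A⁻¹.charpoly := by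
    rw [← charpoly_map, hconj, charpoly_mul_comm, ← Matrix.mul_assoc, mul_nonsing_inv _ hG,
      Matrix.one_mul, charpoly_transpose]
  rw [pstar_charpoly_eq_map_charpoly_inv A hA, ← hmap, Polynomial.map_map,
    show σ.comp σ = RingHom.id K from RingHom.ext hσ, Polynomial.map_id]

variable {M N : Type*} [AddCommGroup M] [Module K M] [AddCommGroup N] [Module K N]

theorem isUnit_det_toMatrix₂_of_separatingLeft {ι : Type*} [Fintype ι] [DecidableEq ι]
    (b : Basis ι K M) (c : Basis ι K N) (P : M →ₗ[K] N →ₛₗ[σ] K) (hP : P.SeparatingLeft) :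
    IsUnit (LinearMap.toMatrix₂ b c P).det := by
  rw [isUnit_iff_ne_zero, Ne, ← exists_vecMul_eq_zero_iff]
  rintro ⟨v, hv, hvP⟩
  refine hv (b.equivFun.symm.injective ?_)
  rw [map_zero]
  refine hP _ fun y ↦ ?_
  have hv' : ⇑(b.repr (b.equivFun.symm v)) = v := b.equivFun.apply_symm_apply v
  rw [apply_eq_dotProduct_toMatrix₂_mulVec b c, dotProduct_mulVec, hv']
  simp [hvP]

theorem LinearMap.charpoly_eq_pstar_of_pairing [FiniteDimensional K M] [FiniteDimensional K N]
    (hσ : ∀ x, σ (σ x) = x) (P : M →ₗ[K] N →ₛₗ[σ] K) (hdim : finrank K M = finrank K N)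
    (hP : P.SeparatingLeft) (f : M →ₗ[K] M) (f' : N →ₗ[K] N)
    (hf : ∀ x y, P (f x) (f' y) = P x y) :
    f'.charpoly = pstar σ f.charpoly := by
  let b := finBasis K M
  let c := (finBasis K N).reindex (finCongr hdim.symm)
  have hG : (LinearMap.toMatrix b b f)ᵀ * LinearMap.toMatrix₂ b c P *
      (LinearMap.toMatrix c c f').map σ = LinearMap.toMatrix₂ b c P := by
    ext i j
    conv_rhs => rw [LinearMap.toMatrix₂_apply, ← hf, apply_eq_dotProduct_toMatrix₂_mulVec b c]
    simp only [Matrix.mul_apply, transpose_apply, toMatrix_apply, toMatrix₂_apply, map_apply,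
      Finset.sum_mul, dotProduct, RingHom.coe_id, Function.comp_apply, id_eq, mulVec,
      Finset.mul_sum]
    rw [Finset.sum_comm]
    simp only [mul_assoc]
  rw [← LinearMap.charpoly_toMatrix f b, ← LinearMap.charpoly_toMatrix f' c]
  exact charpoly_eq_pstar_of_transpose_mul_mul_map hσ
    (isUnit_det_toMatrix₂_of_separatingLeft b c P hP) hG

end Pairing

theorem LinearMap.finrank_map_eq_of_injective {K M N : Type*} [Field K] [AddCommGroup M]
    [Module K M] [AddCommGroup N] [Module K N] {σ : K →+* K} [RingHomSurjective σ]
    (f : M →ₛₗ[σ] N) (hf : Function.Injective f) (W : Submodule K M) :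
    Module.finrank K (W.map f) = Module.finrank K W := by
  have hbij : Function.Bijective (f.submoduleMap W) :=
    ⟨fun _ _ h ↦ Subtype.ext (hf congr(($h : N))), f.submoduleMap_surjective W⟩
  simpa [Module.finrank] using (congrArg Cardinal.toNat <| lift_rank_eq_of_equiv_equiv σ
    (AddEquiv.ofBijective (f.submoduleMap W) hbij) ⟨σ.injective, RingHomSurjective.is_surjective⟩
    (map_smulₛₗ (f.submoduleMap W))).symm

section Hermitian

open Module

variable {E V : Type*} [Field E] {σ : E →+* E} [AddCommGroup V] [Module E V]
  (B : V →ₗ[E] V →ₛₗ[σ] E)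

theorem le_perp_perp (hB : B.IsRefl) (W : Submodule E V) : W ≤ perp B (perp B W) :=
  fun w hw y hy ↦ hB y w (hy w hw)

noncomputable def perpQuotForm (hB : B.IsRefl) (W : Submodule E V) :
    (perp B W ⧸ W.comap (perp B W).subtype) →ₗ[E]
      (perp B W ⧸ W.comap (perp B W).subtype) →ₛₗ[σ] E :=
  (B.domRestrict₁₂ (perp B W) (perp B W)).liftQ₂ _ _
    (fun x hx ↦ LinearMap.ext fun y ↦ hB y x (y.2 x hx))
    (fun y hy ↦ LinearMap.ext fun x ↦ x.2 y hy)

noncomputable def quotPerpPairing (hB : B.IsRefl) (W : Submodule E V) :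
    W →ₗ[E] (V ⧸ perp B W) →ₛₗ[σ] E :=
  ((perp B W).liftQ (B.domRestrict W).flip fun x hx ↦
    LinearMap.ext fun w ↦ hB x w (hx w w.2)).flip

variable {B} {W : Submodule E V}

theorem perpQuotForm_mk (hB : B.IsRefl) (x y : perp B W) :
    perpQuotForm B hB W (Submodule.Quotient.mk x) (Submodule.Quotient.mk y) = B x y :=
  rfl

theorem perpQuotForm_swap (hB : B.IsRefl) (h_herm : ∀ x y, B y x = σ (B x y)) (u v) :
    perpQuotForm B hB W v u = σ (perpQuotForm B hB W u v) := by
  induction u using Submodule.Quotient.induction_on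
  induction v using Submodule.Quotient.induction_on
  exact h_herm _ _

theorem perpQuotForm_inducedMap (hB : B.IsRefl) {f : V →ₗ[E] V}
    (hf : ∀ x y, B (f x) (f y) = B x y) (hW : ∀ x ∈ W, f x ∈ W)
    (hP : ∀ x ∈ perp B W, f x ∈ perp B W) (u v) :
    perpQuotForm B hB W (inducedMap f W (perp B W) u) (inducedMap f W (perp B W) v) =
      perpQuotForm B hB W u v := by
  induction u using Submodule.Quotient.induction_on
  induction v using Submodule.Quotient.induction_on
  rw [inducedMap_mk f hP hW, inducedMap_mk f hP hW]
  exact hf _ _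

theorem quotPerpPairing_restrictMap_quotMap (hB : B.IsRefl) {f : V →ₗ[E] V}
    (hf : ∀ x y, B (f x) (f y) = B x y) (hW : ∀ x ∈ W, f x ∈ W)
    (hP : perp B W ≤ (perp B W).comap f) (w v) :
    quotPerpPairing B hB W (restrictMap f W w) (quotMap f (perp B W) v) =
      quotPerpPairing B hB W w v := by
  induction v using Submodule.Quotient.induction_on
  rw [quotMap_mk f hP, restrictMap_eq f hW]
  exact hf _ _

theorem quotPerpPairing_separatingLeft (hB : B.IsRefl) (h_nondeg : B.SeparatingLeft) :
    (quotPerpPairing B hB W).SeparatingLeft :=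
  fun w hw ↦ Subtype.ext <| h_nondeg w fun y ↦ hw (Submodule.Quotient.mk y)

variable [FiniteDimensional E V]

theorem map_perp_le_perp {g : V ≃ₗ[E] V} (hg : ∀ x y, B (g x) (g y) = B x y)
    (hWg : W.map g.toLinearMap ≤ W) : (perp B W).map g.toLinearMap ≤ perp B W := by
  have hgW : W.map g.toLinearMap = W :=
    Submodule.eq_of_le_of_finrank_le hWg (g.finrank_map_eq W).ge
  rintro _ ⟨x, hx, rfl⟩ w hw
  rw [← hgW] at hw
  obtain ⟨w, hw, rfl⟩ := hw
  exact (hg x w).trans (hx w hw)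

variable [RingHomSurjective σ]

theorem finrank_add_finrank_perp (hB : B.IsRefl) (h_nondeg : B.SeparatingLeft)
    (W : Submodule E V) : finrank E W + finrank E (perp B W) = finrank E V := by
  have hinj : Function.Injective B.flip :=
    (injective_iff_map_eq_zero _).mpr fun w hw ↦
      h_nondeg w fun y ↦ hB y w (LinearMap.congr_fun hw y)
  have hperp : perp B W = (W.map B.flip).dualCoannihilator := by
    ext x
    simp [perp, Submodule.mem_dualCoannihilator]
  rw [hperp, ← B.flip.finrank_map_eq_of_injective hinj W,
    Subspace.finrank_add_finrank_dualCoannihilator_eq]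

theorem finrank_eq_finrank_quotient_perp (hB : B.IsRefl) (h_nondeg : B.SeparatingLeft)
    (W : Submodule E V) : finrank E W = finrank E (V ⧸ perp B W) := by
  have := finrank_add_finrank_perp hB h_nondeg W
  have := (perp B W).finrank_quotient_add_finrank
  omega

theorem perp_perp (hB : B.IsRefl) (h_nondeg : B.SeparatingLeft) (W : Submodule E V) :
    perp B (perp B W) = W := by
  have h₁ := finrank_add_finrank_perp hB h_nondeg W
  have h₂ := finrank_add_finrank_perp hB h_nondeg (perp B W)
  exact (Submodule.eq_of_le_of_finrank_le (le_perp_perp B hB W) (by omega)).symm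

theorem perpQuotForm_separatingLeft (hB : B.IsRefl) (h_nondeg : B.SeparatingLeft) :
    (perpQuotForm B hB W).SeparatingLeft := by
  intro u hu
  induction u using Submodule.Quotient.induction_on with | H x => ?_
  rw [Submodule.Quotient.mk_eq_zero]
  have hx : (x : V) ∈ perp B (perp B W) := fun y hy ↦ hu (Submodule.Quotient.mk ⟨y, hy⟩)
  rwa [perp_perp hB h_nondeg W] at hx

end Hermitian

theorem stmt12 {E : Type*} [Field E] (σ : E →+* E) (hσ : ∀ x, σ (σ x) = x)
    {V : Type*} [AddCommGroup V] [Module E V] [FiniteDimensional E V]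
    (B : V →ₗ[E] V →ₛₗ[σ] E)
    (h_herm : ∀ x y : V, B y x = σ (B x y))
    (h_nondeg : ∀ x : V, (∀ y : V, B x y = 0) → x = 0)
    (g : V ≃ₗ[E] V) (hg : ∀ x y : V, B (g x) (g y) = B x y)
    (W : Submodule E V)
    (hWg : Submodule.map g.toLinearMap W ≤ W)
    (hWiso : W ≤ perp B W) :
    Submodule.map g.toLinearMap (perp B W) ≤ perp B W ∧
    LinearMap.charpoly g.toLinearMap
      = LinearMap.charpoly (restrictMap g.toLinearMap W)
        * LinearMap.charpoly (inducedMap g.toLinearMap W (perp B W))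
        * LinearMap.charpoly (quotMap g.toLinearMap (perp B W)) ∧
    (∃ B' : (↥(perp B W) ⧸ (Submodule.comap (perp B W).subtype W)) →ₗ[E]
        (↥(perp B W) ⧸ (Submodule.comap (perp B W).subtype W)) →ₛₗ[σ] E,
      (∀ x y : ↥(perp B W),
        B' (Submodule.Quotient.mk x) (Submodule.Quotient.mk y) = B (x : V) (y : V)) ∧
      (∀ u v, B' v u = σ (B' u v)) ∧
      (∀ u, (∀ v, B' u v = 0) → u = 0) ∧
      (∀ u v, B' (inducedMap g.toLinearMap W (perp B W) u)
          (inducedMap g.toLinearMap W (perp B W) v) = B' u v)) ∧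
    LinearMap.charpoly (inducedMap g.toLinearMap W (perp B W))
      = pstar σ (LinearMap.charpoly (inducedMap g.toLinearMap W (perp B W))) ∧
    LinearMap.charpoly (quotMap g.toLinearMap (perp B W))
      = pstar σ (LinearMap.charpoly (restrictMap g.toLinearMap W)) := by
  have hB : B.IsRefl := fun x y h ↦ by rw [h_herm, h, map_zero]
  have : RingHomSurjective σ := ⟨fun x ↦ ⟨σ x, hσ x⟩⟩
  have hPg := map_perp_le_perp hg hWg
  have hgW : ∀ x ∈ W, g x ∈ W := fun x hx ↦ hWg (Submodule.mem_map_of_mem hx)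
  have hgP : ∀ x ∈ perp B W, g x ∈ perp B W := fun x hx ↦ hPg (Submodule.mem_map_of_mem hx)
  have hsep := perpQuotForm_separatingLeft (W := W) hB h_nondeg
  have hunitary := perpQuotForm_inducedMap hB (f := g.toLinearMap) hg hgW hgP
  refine ⟨hPg, charpoly_eq_restrictMap_mul_inducedMap_mul_quotMap _ hWiso hgW hgP,
    ⟨perpQuotForm B hB W, perpQuotForm_mk hB, perpQuotForm_swap hB h_herm, hsep,
      hunitary⟩,
    LinearMap.charpoly_eq_pstar_of_pairing hσ _ rfl hsep _ _ hunitary,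
    LinearMap.charpoly_eq_pstar_of_pairing hσ (quotPerpPairing B hB W)
      (finrank_eq_finrank_quotient_perp hB h_nondeg W)
      (quotPerpPairing_separatingLeft hB h_nondeg) _ _
      (quotPerpPairing_restrictMap_quotMap hB hg hgW hgP)⟩
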